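/- Let R be a subtree of a tree A which is repulsive for a group-graph G over A, meaning: for the partial order ≺_R on vertices defined by containment of geodesics to R, for every edge e = ⟨v,v'⟩ with v ≺_R v', the restriction map ρ_{v'}^e : G_{v'} → G_e is surjective. Then the restriction map H^1(A,G) → H^1(R, r*G), induced by sending a cocycle (g_{v,e})_{v∈e∈Ed_A} to its restriction (g_{v,e})_{v∈e∈Ed_R}, is a bijection of pointed sets; if G takes values in abelian groups it is a group isomorphism. -/
import Mathlib

/-!
STATEMENT 3. Let `R` be a subtree of a tree `A` which is repulsive for a group-graph `G`
over `A`: for every edge `e = ⟨v,v'⟩` with `v ≺_R v'` (i.e. `v'` one step farther from `R`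
than `v`, so that the geodesic from `v` to `R` is contained in that of `v'`), the
restriction map `ρ_{v'}^e : G_{v'} → G_e` is surjective.  Then the restriction map
`H¹(A,G) → H¹(R, r*G)`, `(g_{v,e})_{v∈e∈Ed_A} ↦ (g_{v,e})_{v∈e∈Ed_R}`, is a bijection of
pointed sets.
-/

structure GroupGraph {V : Type} (A : SimpleGraph V) where
  Gc : Sym2 V → Type
  [grp : ∀ x, Group (Gc x)]
  ρ : ∀ (v : V) (e : Sym2 V), e ∈ A.edgeSet → v ∈ e → Gc (Sym2.diag v) →* Gc e

attribute [instance] GroupGraph.grp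

namespace GroupGraph

variable {V : Type} {A : SimpleGraph V}

def C0 (G : GroupGraph A) : Type := ∀ v : V, G.Gc (Sym2.diag v)

/-- 1-cocycles over a subgraph `B ≤ A`. -/
def Cocycle (G : GroupGraph A) (B : SimpleGraph V) : Type :=
  {c : ∀ (v : V) (e : Sym2 V), e ∈ B.edgeSet → v ∈ e → G.Gc e //
    ∀ v e he hv, c v e he hv * c (Sym2.Mem.other hv) e he (Sym2.other_mem hv) = 1}

def Rel (G : GroupGraph A) {B : SimpleGraph V} (hB : B ≤ A) (c c' : Cocycle G B) : Prop :=
  ∃ g : C0 G, ∀ v e (he : e ∈ B.edgeSet) (hv : v ∈ e),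
    c'.1 v e he hv =
      (G.ρ v e (SimpleGraph.edgeSet_mono hB he) hv (g v))⁻¹ * c.1 v e he hv *
        G.ρ (Sym2.Mem.other hv) e (SimpleGraph.edgeSet_mono hB he) (Sym2.other_mem hv)
          (g (Sym2.Mem.other hv))

/-- The first cohomology pointed set of `G` over the subgraph `B ≤ A`. -/
def H1 (G : GroupGraph A) {B : SimpleGraph V} (hB : B ≤ A) : Type := Quot (Rel G hB)

/-- Restriction of cocycles from `A` to the subgraph `B`. -/
def resZ (G : GroupGraph A) {B : SimpleGraph V} (hB : B ≤ A)
    (c : Cocycle G A) : Cocycle G B :=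
  ⟨fun v e he hv => c.1 v e (SimpleGraph.edgeSet_mono hB he) hv,
    fun v e he hv => c.2 v e (SimpleGraph.edgeSet_mono hB he) hv⟩

/-- The restriction map `H¹(A,G) → H¹(B, G|_B)`. -/
def resH (G : GroupGraph A) {B : SimpleGraph V} (hB : B ≤ A) :
    H1 G (le_refl A) → H1 G hB :=
  Quot.map (resZ G hB) (by
    rintro c c' ⟨g, hg⟩
    exact ⟨g, fun v e he hv => hg v e (SimpleGraph.edgeSet_mono hB he) hv⟩)

/-- Auxiliary recursive extension of a 0-cochain from `R` to all of `A`,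
going down the levels of the distance function `dR`. -/
noncomputable def gext (G : GroupGraph A)
    (dR : V → ℕ) (Rv : Set V) [DecidablePred (· ∈ Rv)] (par : V → V)
    (hpar : ∀ v, v ∉ Rv → dR (par v) + 1 = dR v)
    (F : ∀ v, v ∉ Rv → G.Gc (Sym2.diag (par v)) → G.Gc (Sym2.diag v))
    (g : C0 G) : ∀ v : V, G.Gc (Sym2.diag v) := fun v =>
  if h : v ∈ Rv then g v
  else F v h (gext G dR Rv par hpar F g (par v))
termination_by v => dR v
decreasing_by have := hpar v h; omega

/-- `Rel` is an equivalence relation. -/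
theorem rel_equivalence (G : GroupGraph A) {B : SimpleGraph V} (hB : B ≤ A) :
    Equivalence (Rel G hB) := by
  constructor
  · intro c
    refine ⟨fun v => 1, fun v e he hv => ?_⟩
    simp
  · rintro c c' ⟨g, hg⟩
    refine ⟨fun v => (g v)⁻¹, fun v e he hv => ?_⟩
    rw [hg v e he hv]
    simp [mul_assoc]
  · rintro c c' c'' ⟨g, hg⟩ ⟨g', hg'⟩
    refine ⟨fun v => g v * g' v, fun v e he hv => ?_⟩
    rw [hg' v e he hv, hg v e he hv]
    simp [mul_assoc]

/-- The inverse relation for cocycle values at the two endpoints of an edge. -/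
theorem cocycle_inv (G : GroupGraph A) (cc : Cocycle G A) (v w : V) (e : Sym2 V)
    (he : e ∈ A.edgeSet) (hv : v ∈ e) (hw : w ∈ e) (hne : w ≠ v) :
    cc.1 w e he hw = (cc.1 v e he hv)⁻¹ := by
  have h2 : w = Sym2.Mem.other hv := by
    have hsp := Sym2.other_spec hv
    rcases Sym2.mem_iff.1 (hsp ▸ hw) with h | h
    · exact absurd h hne
    · exact h
  subst h2
  exact eq_inv_of_mul_eq_one_right (cc.2 v e he hv)

end GroupGraph

open GroupGraph in
theorem statement3 {V : Type} {A : SimpleGraph V} (hA : A.IsTree)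
    (G : GroupGraph A)
    -- the subtree `R`, given by a nonempty set of vertices inducing a connected subgraph:
    (Rv : Set V) (hRne : Rv.Nonempty) (hRconn : (A.induce Rv).Connected)
    -- the corresponding subgraph of `A`:
    (B : SimpleGraph V) (hB : B ≤ A)
    (hBadj : ∀ v w : V, B.Adj v w ↔ A.Adj v w ∧ v ∈ Rv ∧ w ∈ Rv)
    -- the distance to `R`:
    (dR : V → ℕ) (hdR : ∀ v, dR v = sInf {n : ℕ | ∃ r ∈ Rv, A.dist v r = n})
    -- `R` is repulsive for `G`: for each edge `⟨v,v'⟩` with `v ≺_R v'`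
    -- (i.e. `v'` one step farther from `R`), the restriction `ρ_{v'}` is surjective:
    (hrep : ∀ (v v' : V) (h : A.Adj v v'), dR v' = dR v + 1 →
      Function.Surjective (G.ρ v' s(v, v') (A.mem_edgeSet.2 h) (Sym2.mem_mk_right v v'))) :
    Function.Bijective (resH G hB) := by
  classical
  have hconn : A.Connected := hA.isConnected
  have hSne : ∀ v : V, {n : ℕ | ∃ r ∈ Rv, A.dist v r = n}.Nonempty := by
    obtain ⟨r0, hr0⟩ := hRne
    exact fun v => ⟨A.dist v r0, r0, hr0, rfl⟩
  have hmem : ∀ v : V, ∃ r ∈ Rv, A.dist v r = dR v := by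
    intro v; rw [hdR v]; exact Nat.sInf_mem (hSne v)
  have hle : ∀ v r, r ∈ Rv → dR v ≤ A.dist v r := by
    intro v r hr; rw [hdR v]; exact Nat.sInf_le ⟨r, hr, rfl⟩
  have hR0 : ∀ v, v ∈ Rv ↔ dR v = 0 := by
    intro v; constructor
    · intro hv
      have := hle v v hv
      rw [SimpleGraph.dist_self] at this
      omega
    · intro h0
      obtain ⟨r, hr, hdist⟩ := hmem v
      rw [h0] at hdist
      rwa [(hconn.dist_eq_zero_iff).1 hdist]
  have hlip : ∀ u w, A.Adj u w → dR u ≤ dR w + 1 := by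
    intro u w h
    obtain ⟨r, hr, hd⟩ := hmem w
    calc dR u ≤ A.dist u r := hle u r hr
      _ ≤ A.dist u w + A.dist w r := hconn.dist_triangle
      _ = dR w + 1 := by rw [hd, SimpleGraph.dist_eq_one_iff_adj.2 h]; omega
  -- geodesics to `R` together with the support bound
  have geo : ∀ v : V, ∃ r, ∃ _ : r ∈ Rv, ∃ P : A.Walk v r, P.length = dR v ∧
      ∀ x ∈ P.support, x ≠ v → dR x < dR v := by
    intro v
    obtain ⟨r, hr, hd⟩ := hmem v
    obtain ⟨P, hP⟩ := hconn.exists_walk_length_eq_dist v r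
    refine ⟨r, hr, P, by rw [hP, hd], ?_⟩
    intro x hx hxv
    obtain ⟨q, s, rfl⟩ := (SimpleGraph.Walk.mem_support_iff_exists_append).1 hx
    have hql : q.length ≠ 0 := fun h => hxv (SimpleGraph.Walk.eq_of_length_eq_zero h).symm
    have h1 : dR x ≤ s.length := (hle x r hr).trans (SimpleGraph.dist_le s)
    have h2 : q.length + s.length = dR v := by
      rw [← SimpleGraph.Walk.length_append q s, hP, hd]
    omega
  -- walks inside `R`
  have hRwalk : ∀ r r', r ∈ Rv → r' ∈ Rv → ∃ Q : A.Walk r r', ∀ x ∈ Q.support, x ∈ Rv := by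
    intro r r' hr hr'
    obtain ⟨q⟩ := hRconn ⟨r, hr⟩ ⟨r', hr'⟩
    refine ⟨q.map ⟨Subtype.val, fun {a b} h => h⟩, fun x hx => ?_⟩
    rw [SimpleGraph.Walk.support_map] at hx
    obtain ⟨y, _, rfl⟩ := List.mem_map.1 hx
    exact y.2
  -- existence of a parent
  have hpar_ex : ∀ v, v ∉ Rv → ∃ p, A.Adj p v ∧ dR p + 1 = dR v := by
    intro v hv
    have h0 : dR v ≠ 0 := fun h => hv ((hR0 v).2 h)
    obtain ⟨r, hr, hd⟩ := hmem v
    obtain ⟨P, hP⟩ := hconn.exists_walk_length_eq_dist v r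
    cases P with
    | nil => exact absurd hr hv
    | @cons _ b _ h q =>
      refine ⟨b, h.symm, ?_⟩
      have h1 : dR b ≤ q.length := (hle b r hr).trans (SimpleGraph.dist_le q)
      have h2 : q.length + 1 = dR v := by
        rw [← SimpleGraph.Walk.length_cons h q, hP, hd]
      have h3 := hlip v b h
      omega
  -- uniqueness of the parent
  have huniq : ∀ v p p', A.Adj p v → A.Adj p' v → dR p + 1 = dR v → dR p' + 1 = dR v →
      p = p' := by
    intro v p p' hp hp' hdp hdp'
    by_contra hne
    obtain ⟨r, hr, P, hPlen, hPav⟩ := geo p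
    obtain ⟨r', hr', P', hP'len, hP'av⟩ := geo p'
    obtain ⟨Q, hQ⟩ := hRwalk r r' hr hr'
    have hvR : v ∉ Rv := fun h => by have := (hR0 v).1 h; omega
    have hvP : v ∉ P.support := by
      intro h
      have := hPav v h (fun h2 => hp.ne h2.symm)
      omega
    have hvP' : v ∉ P'.support := by
      intro h
      have := hP'av v h (fun h2 => hp'.ne h2.symm)
      omega
    have hvQ : v ∉ Q.support := fun h => hvR (hQ v h)
    set W : A.Walk p p' := P.append (Q.append P'.reverse) with hW
    have hvW : v ∉ W.support := by
      rw [hW]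
      simp only [SimpleGraph.Walk.mem_support_append_iff, SimpleGraph.Walk.support_reverse,
        List.mem_reverse]
      tauto
    have hpath : (SimpleGraph.Walk.cons hp (SimpleGraph.Walk.cons hp'.symm
        SimpleGraph.Walk.nil)).IsPath := by
      simp only [SimpleGraph.Walk.isPath_def, SimpleGraph.Walk.support_cons,
        SimpleGraph.Walk.support_nil]
      have hvp' : v ≠ p' := fun h => hp'.ne h.symm
      simp [List.nodup_cons, hp.ne, hne, hvp']
    have huq := hA.IsAcyclic.path_unique W.toPath ⟨_, hpath⟩
    have hedge : s(p, v) ∈ W.edges := by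
      refine SimpleGraph.Walk.edges_toPath_subset W ?_
      rw [huq]
      simp
    exact hvW (SimpleGraph.Walk.snd_mem_support_of_mem_edges W hedge)
  -- no edge between two vertices at equal distance outside R
  have hplateau : ∀ v w, A.Adj v w → dR v = dR w → v ∈ Rv ∧ w ∈ Rv := by
    intro v w hvw heq
    rcases Nat.eq_zero_or_pos (dR v) with h0 | h0
    · exact ⟨(hR0 v).2 h0, (hR0 w).2 (by omega)⟩
    · exfalso
      obtain ⟨r, hr, P, hPlen, hPav⟩ := geo v
      obtain ⟨r', hr', P', hP'len, hP'av⟩ := geo w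
      obtain ⟨Q, hQ⟩ := hRwalk r r' hr hr'
      have hvR : v ∉ Rv := fun h => by have := (hR0 v).1 h; omega
      have hwP : w ∉ P.support := by
        intro h
        have := hPav w h hvw.ne'
        omega
      have hvP' : v ∉ P'.support := by
        intro h
        have := hP'av v h hvw.ne
        omega
      set W : A.Walk v w := P.append (Q.append P'.reverse) with hW
      have hpath : (SimpleGraph.Walk.cons hvw SimpleGraph.Walk.nil).IsPath := by
        simp [SimpleGraph.Walk.isPath_def, hvw.ne]
      have huq := hA.IsAcyclic.path_unique W.toPath ⟨_, hpath⟩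
      have hedge : s(v, w) ∈ W.edges := by
        refine SimpleGraph.Walk.edges_toPath_subset W ?_
        rw [huq]
        simp
      rw [hW, SimpleGraph.Walk.edges_append, SimpleGraph.Walk.edges_append] at hedge
      rcases List.mem_append.1 hedge with h | h
      · exact hwP (SimpleGraph.Walk.fst_mem_support_of_mem_edges P
          (by rwa [Sym2.eq_swap] at h))
      · rcases List.mem_append.1 h with h | h
        · exact hvR (hQ v (SimpleGraph.Walk.fst_mem_support_of_mem_edges Q h))
        · rw [SimpleGraph.Walk.edges_reverse, List.mem_reverse] at h
          exact hvP' (SimpleGraph.Walk.fst_mem_support_of_mem_edges P' h)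
  constructor
  · -- injectivity
    intro x y hxy
    induction x using Quot.ind with | _ c => ?_
    induction y using Quot.ind with | _ c' => ?_
    have hxy' : Quot.mk (Rel G hB) (resZ G hB c) = Quot.mk (Rel G hB) (resZ G hB c') := hxy
    have hrel : Rel G hB (resZ G hB c) (resZ G hB c') :=
      ((rel_equivalence G hB).eqvGen_iff).1 (Quot.eq.1 hxy')
    obtain ⟨g, hg⟩ := hrel
    -- choose parents
    have hex : ∀ v, ∃ p, v ∉ Rv → A.Adj p v ∧ dR p + 1 = dR v := by
      intro v
      by_cases h : v ∈ Rv
      · exact ⟨v, fun h' => absurd h h'⟩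
      · obtain ⟨p, h1, h2⟩ := hpar_ex v h
        exact ⟨p, fun _ => ⟨h1, h2⟩⟩
    choose par hpar using hex
    -- choose preimages
    have hFex : ∀ v (h : v ∉ Rv) (x : G.Gc (Sym2.diag (par v))),
        ∃ yv : G.Gc (Sym2.diag v),
          G.ρ v s(par v, v) (A.mem_edgeSet.2 (hpar v h).1) (Sym2.mem_mk_right _ _) yv =
            c.1 v s(par v, v) (A.mem_edgeSet.2 (hpar v h).1) (Sym2.mem_mk_right _ _) *
            G.ρ (par v) s(par v, v) (A.mem_edgeSet.2 (hpar v h).1) (Sym2.mem_mk_left _ _) x *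
            (c'.1 v s(par v, v) (A.mem_edgeSet.2 (hpar v h).1) (Sym2.mem_mk_right _ _))⁻¹ :=
      fun v h x => hrep (par v) v (hpar v h).1 (hpar v h).2.symm _
    choose F hF using hFex
    have h1 : ∀ u, G.gext dR Rv par (fun v h => (hpar v h).2) F g u =
        if h : u ∈ Rv then g u
        else F u h (G.gext dR Rv par (fun v h => (hpar v h).2) F g (par u)) :=
      fun u => by rw [GroupGraph.gext]
    set g' : C0 G := G.gext dR Rv par (fun v h => (hpar v h).2) F g with hg'def
    have hg'R : ∀ u, u ∈ Rv → g' u = g u := fun u hu => by rw [h1 u, dif_pos hu]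
    -- the defining relation at the edge from a vertex to its parent
    have prim : ∀ u (h : u ∉ Rv) (e : Sym2 V) (hesp : e = s(par u, u)) (he : e ∈ A.edgeSet)
        (hu : u ∈ e) (hp : par u ∈ e),
        c'.1 u e he hu =
          (G.ρ u e he hu (g' u))⁻¹ * c.1 u e he hu * G.ρ (par u) e he hp (g' (par u)) := by
      intro u h e hesp he hu hp
      subst hesp
      have h2 : G.ρ u s(par u, u) he hu (g' u) =
          c.1 u s(par u, u) he hu * G.ρ (par u) s(par u, u) he hp (g' (par u)) *
            (c'.1 u s(par u, u) he hu)⁻¹ := by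
        rw [h1 u, dif_neg h]
        exact hF u h (G.gext dR Rv par (fun v h => (hpar v h).2) F g (par u))
      rw [h2]
      group
    refine Quot.sound ⟨g', ?_⟩
    intro v e he hv
    have key : ∀ w (hw : w ∈ e), s(v, w) = e →
        c'.1 v e he hv =
          (G.ρ v e he hv (g' v))⁻¹ * c.1 v e he hv * G.ρ w e he hw (g' w) := by
      intro w hw hesp
      have hadj : A.Adj v w := A.mem_edgeSet.1 (by rw [hesp]; exact he)
      have htri : (v ∈ Rv ∧ w ∈ Rv) ∨ dR v + 1 = dR w ∨ dR w + 1 = dR v := by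
        by_cases hvw : v ∈ Rv ∧ w ∈ Rv
        · exact Or.inl hvw
        · have ha := hlip v w hadj
          have hb := hlip w v hadj.symm
          have hc : dR v ≠ dR w := fun h => hvw (hplateau v w hadj h)
          omega
      rcases htri with ⟨hvR, hwR⟩ | hb | hc
      · -- both endpoints in R
        have heB : e ∈ B.edgeSet := by
          rw [← hesp]
          exact (B.mem_edgeSet).2 ((hBadj v w).2 ⟨hadj, hvR, hwR⟩)
        have how : Sym2.Mem.other hv = w :=
          Sym2.congr_right.1 ((Sym2.other_spec hv).trans hesp.symm)
        subst how
        rw [hg'R v hvR, hg'R _ hwR]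
        exact hg v e heB hv
      · -- w is one step farther: v is its parent
        have hwnR : w ∉ Rv := fun hmem => by have := (hR0 w).1 hmem; omega
        have hpw : par w = v :=
          huniq w (par w) v (hpar w hwnR).1 hadj (hpar w hwnR).2 hb
        have hpri := prim w hwnR
        rw [hpw] at hpri
        have hb2 := hpri e hesp.symm he hw hv
        rw [cocycle_inv G c' w v e he hw hv hadj.ne, hb2,
          cocycle_inv G c w v e he hw hv hadj.ne]
        group
      · -- v is one step farther: w is its parent
        have hvnR : v ∉ Rv := fun hmem => by have := (hR0 v).1 hmem; omega
        have hpv : par v = w :=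
          huniq v (par v) w (hpar v hvnR).1 hadj.symm (hpar v hvnR).2 hc
        have hpri := prim v hvnR
        rw [hpv] at hpri
        exact hpri e (by rw [← hesp]; exact Sym2.eq_swap) he hv hw
    exact key (Sym2.Mem.other hv) (Sym2.other_mem hv) (Sym2.other_spec hv)
  · -- surjectivity
    intro y
    induction y using Quot.ind with | _ d => ?_
    refine ⟨Quot.mk _ ⟨fun v e he hv => if h : e ∈ B.edgeSet then d.1 v e h hv else 1, ?_⟩, ?_⟩
    · intro v e he hv
      by_cases h : e ∈ B.edgeSet
      · simp only [dif_pos h]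
        exact d.2 v e h hv
      · simp [dif_neg h]
    · show Quot.mk (Rel G hB) (resZ G hB _) = Quot.mk (Rel G hB) d
      congr 1
      apply Subtype.ext
      funext v e he hv
      exact dif_pos he
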